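/- arXiv:2409.02254 — 2 statements merged into one kernel-verified Lean document; each statement's English description precedes it below -/
import Mathlib

section
/- If the system {sin(ρₙ t)}_{n>p} is a Riesz basis in L₂(0,2π), then the system {ξₙ}_{n>p} of pairs ξₙ = (sin(ρₙ t)·cos(ρₙ π), −cos(ρₙ t)·sin(ρₙ π)) is a Riesz basis in L₂(0,π) ⊕ L₂(0,π). -/
open MeasureTheory Set Finset Real

/-- First component of `ξₙ`: `cos(ρₙπ)·sin(ρₙ t)`. -/
noncomputable def xi1 (ρ : ℂ) (t : ℝ) : ℂ :=
  Complex.cos (ρ * (Real.pi : ℂ)) * Complex.sin (ρ * (t : ℂ))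

/-- Second component of `ξₙ`: `−sin(ρₙπ)·cos(ρₙ t)`. -/
noncomputable def xi2 (ρ : ℂ) (t : ℝ) : ℂ :=
  -(Complex.sin (ρ * (Real.pi : ℂ))) * Complex.cos (ρ * (t : ℂ))

/-!
Put `F(t) = ∑ bₙ sin(ρₙ t)`. By the addition formula,
`∑ bₙ ξₙ(t) = ((F(π + t) - F(π - t)) / 2, -(F(π + t) + F(π - t)) / 2)`, so folding `(0, 2π)` at `π`
and the parallelogram law give `‖∑ bₙ ξₙ‖² = ‖F‖² / 2`: the Riesz bounds pass to `ξ` halved.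
Conversely, a pair `(H₁, H₂)` orthogonal to every `ξₙ` unfolds into the function on `(0, 2π)`
taking the values `-(H₁ + H₂)(t) / 2` at `π - t` and `(H₁ - H₂)(t) / 2` at `π + t`; it is
orthogonal to every `sin(ρₙ ·)`, hence zero, and so are `H₁` and `H₂`.
-/

theorem intervalIntegral_comp_add_add_comp_sub {E : Type*} [NormedAddCommGroup E]
    [NormedSpace ℝ E] (a : ℝ) {g : ℝ → E}
    (hg : IntervalIntegrable g volume 0 (2 * a)) :
    (∫ t in (0 : ℝ)..a, g (a + t)) + (∫ t in (0 : ℝ)..a, g (a - t)) =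
      ∫ t in (0 : ℝ)..2 * a, g t := by
  have ha : a ∈ uIcc 0 (2 * a) := by
    rcases le_total 0 a with h | h
    · exact mem_uIcc.2 (Or.inl ⟨h, by linarith⟩)
    · exact mem_uIcc.2 (Or.inr ⟨by linarith, h⟩)
  rw [intervalIntegral.integral_comp_add_left, intervalIntegral.integral_comp_sub_left,
    add_zero, sub_self, sub_zero, add_comm, ← two_mul,
    intervalIntegral.integral_add_adjacent_intervals
      (hg.mono_set (uIcc_subset_uIcc left_mem_uIcc ha))
      (hg.mono_set (uIcc_subset_uIcc ha right_mem_uIcc))]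

theorem norm_sub_div_two_sq_add_norm_add_div_two_sq (x y : ℂ) :
    ‖(x - y) / 2‖ ^ 2 + ‖(x + y) / 2‖ ^ 2 = (‖x‖ ^ 2 + ‖y‖ ^ 2) / 2 := by
  have := parallelogram_law_with_norm ℝ x y
  rw [norm_div, norm_div, div_pow, div_pow, Complex.norm_two]
  nlinarith

theorem setIntegral_norm_sq_fold (a : ℝ) (ha : 0 ≤ a) {F : ℝ → ℂ} (hF : Continuous F) :
    (∫ t in Ioc 0 a, ‖(F (a + t) - F (a - t)) / 2‖ ^ 2) +
        (∫ t in Ioc 0 a, ‖(F (a + t) + F (a - t)) / 2‖ ^ 2) =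
      (1 / 2) * ∫ t in Ioc 0 (2 * a), ‖F t‖ ^ 2 := by
  have hint {f : ℝ → ℝ} (hf : Continuous f) (b : ℝ) : IntervalIntegrable f volume 0 b :=
    hf.intervalIntegrable _ _
  rw [← intervalIntegral.integral_of_le ha, ← intervalIntegral.integral_of_le ha,
    ← intervalIntegral.integral_of_le (by linarith),
    ← intervalIntegral_comp_add_add_comp_sub a (hint (by fun_prop) _),
    ← intervalIntegral.integral_add (hint (by fun_prop) _) (hint (by fun_prop) _),
    ← intervalIntegral.integral_add (hint (by fun_prop) _) (hint (by fun_prop) _),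
    ← intervalIntegral.integral_const_mul]
  congr 1 with t
  rw [norm_sub_div_two_sq_add_norm_add_div_two_sq]
  ring

theorem integrableOn_Ioc_mul_of_memLp {a b : ℝ} {f c : ℝ → ℂ}
    (hf : MemLp f 2 (volume.restrict (Ioc a b))) (hc : Continuous c) :
    IntegrableOn (fun t => f t * c t) (Ioc a b) :=
  IntegrableOn.mul_continuousOn_of_subset (hf.integrable one_le_two) hc.continuousOn
    measurableSet_Ioc isCompact_Icc Ioc_subset_Icc_self

section Glue

variable {E : Type*} [NormedAddCommGroup E] (a : ℝ) (A B : ℝ → E)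

noncomputable def glueAt (u : ℝ) : E :=
  (Ioc 0 a).indicator A (a - u) + (Ioc 0 a).indicator B (u - a)

variable {a A B}

theorem glueAt_add {t : ℝ} (ht : t ∈ Ioc 0 a) : glueAt a A B (a + t) = B t := by
  have : a - (a + t) ∉ Ioc 0 a := fun h => by linarith [h.1, ht.1]
  rw [glueAt, indicator_of_notMem this, add_sub_cancel_left, indicator_of_mem ht, zero_add]

theorem glueAt_sub {t : ℝ} (ht : t ∈ Ioc 0 a) : glueAt a A B (a - t) = A t := by
  have : a - t - a ∉ Ioc 0 a := fun h => by linarith [h.1, ht.1]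
  rw [glueAt, indicator_of_notMem this, sub_sub_cancel, indicator_of_mem ht, add_zero]

theorem memLp_glueAt {p : ENNReal} (hA : MemLp A p (volume.restrict (Ioc 0 a)))
    (hB : MemLp B p (volume.restrict (Ioc 0 a))) : MemLp (glueAt a A B) p volume :=
  (((memLp_indicator_iff_restrict measurableSet_Ioc).2 hA).comp_measurePreserving
      (Measure.measurePreserving_sub_left volume a)).add
    (((memLp_indicator_iff_restrict measurableSet_Ioc).2 hB).comp_measurePreserving
      (measurePreserving_sub_right volume a))

theorem ae_eq_zero_of_glueAt (h : glueAt a A B =ᵐ[volume.restrict (Ioc 0 (2 * a))] 0) :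
    A =ᵐ[volume.restrict (Ioc 0 a)] 0 ∧ B =ᵐ[volume.restrict (Ioc 0 a)] 0 := by
  -- on `Icc` rather than `Ioc`, the reflection `a - t` stays inside also for `t = a`
  rw [restrict_Ioc_eq_restrict_Icc, Filter.EventuallyEq,
    ae_restrict_iff' measurableSet_Icc] at h
  rw [Filter.EventuallyEq, Filter.EventuallyEq, ae_restrict_iff' measurableSet_Ioc,
    ae_restrict_iff' measurableSet_Ioc]
  constructor
  · filter_upwards [(Measure.measurePreserving_sub_left volume a).quasiMeasurePreserving.ae h]
      with t ht hta
    exact (glueAt_sub (A := A) (B := B) hta).symm.trans <|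
      ht ⟨by linarith [hta.2], by linarith [hta.1, hta.2]⟩
  · filter_upwards [(measurePreserving_add_left volume a).quasiMeasurePreserving.ae h]
      with t ht hta
    exact (glueAt_add (A := A) (B := B) hta).symm.trans <|
      ht ⟨by linarith [hta.1, hta.2], by linarith [hta.2]⟩

end Glue

theorem setIntegral_glueAt_mul {a : ℝ} (ha : 0 ≤ a) {A B : ℝ → ℂ}
    (hA : MemLp A 2 (volume.restrict (Ioc 0 a))) (hB : MemLp B 2 (volume.restrict (Ioc 0 a)))
    {c : ℝ → ℂ} (hc : Continuous c) :
    ∫ u in Ioc 0 (2 * a), glueAt a A B u * c u =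
      (∫ t in Ioc 0 a, A t * c (a - t)) + ∫ t in Ioc 0 a, B t * c (a + t) := by
  have hint := integrableOn_Ioc_mul_of_memLp ((memLp_glueAt hA hB).restrict (Ioc 0 (2 * a))) hc
  rw [← intervalIntegral.integral_of_le (by linarith),
    ← intervalIntegral_comp_add_add_comp_sub a
      ((intervalIntegrable_iff_integrableOn_Ioc_of_le (by linarith)).2 hint),
    intervalIntegral.integral_of_le ha, intervalIntegral.integral_of_le ha, add_comm]
  congr 1 <;> refine setIntegral_congr_fun measurableSet_Ioc fun t ht => ?_ <;>
    simp only [glueAt_add ht, glueAt_sub ht]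

section Xi

theorem xi1_eq (ρ : ℂ) (t : ℝ) :
    xi1 ρ t = (Complex.sin (ρ * ↑(π + t)) - Complex.sin (ρ * ↑(π - t))) / 2 := by
  rw [xi1]
  push_cast
  rw [mul_add, mul_sub, Complex.sin_add, Complex.sin_sub]
  ring

theorem xi2_eq (ρ : ℂ) (t : ℝ) :
    xi2 ρ t = -((Complex.sin (ρ * ↑(π + t)) + Complex.sin (ρ * ↑(π - t))) / 2) := by
  rw [xi2]
  push_cast
  rw [mul_add, mul_sub, Complex.sin_add, Complex.sin_sub]
  ring

variable (s : Finset ℕ) (ρ b : ℕ → ℂ)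

theorem sum_mul_xi1 (t : ℝ) :
    ∑ n ∈ s, b n * xi1 (ρ n) t =
      ((∑ n ∈ s, b n * Complex.sin (ρ n * ↑(π + t))) -
        ∑ n ∈ s, b n * Complex.sin (ρ n * ↑(π - t))) / 2 := by
  rw [← Finset.sum_sub_distrib, Finset.sum_div]
  exact Finset.sum_congr rfl fun n _ => by rw [xi1_eq]; ring

theorem sum_mul_xi2 (t : ℝ) :
    ∑ n ∈ s, b n * xi2 (ρ n) t =
      -(((∑ n ∈ s, b n * Complex.sin (ρ n * ↑(π + t))) +
        ∑ n ∈ s, b n * Complex.sin (ρ n * ↑(π - t))) / 2) := by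
  rw [← Finset.sum_add_distrib, Finset.sum_div, ← Finset.sum_neg_distrib]
  exact Finset.sum_congr rfl fun n _ => by rw [xi2_eq]; ring

theorem setIntegral_norm_sq_sum_xi :
    (∫ t in Ioc 0 π, ‖∑ n ∈ s, b n * xi1 (ρ n) t‖ ^ 2) +
        (∫ t in Ioc 0 π, ‖∑ n ∈ s, b n * xi2 (ρ n) t‖ ^ 2) =
      (1 / 2) * ∫ t in Ioc 0 (2 * π), ‖∑ n ∈ s, b n * Complex.sin (ρ n * t)‖ ^ 2 := by
  simp only [sum_mul_xi1, sum_mul_xi2, norm_neg]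
  exact setIntegral_norm_sq_fold π pi_pos.le
    (F := fun u : ℝ => ∑ n ∈ s, b n * Complex.sin (ρ n * u)) (by fun_prop)

end Xi

section Completeness

variable {H₁ H₂ : ℝ → ℂ}

noncomputable def unfoldXi (H₁ H₂ : ℝ → ℂ) : ℝ → ℂ :=
  glueAt π (fun t => (-1 / 2 : ℂ) * (H₁ t + H₂ t)) (fun t => (1 / 2 : ℂ) * (H₁ t - H₂ t))

theorem memLp_unfoldXi (hH₁ : MemLp H₁ 2 (volume.restrict (Ioc 0 π)))
    (hH₂ : MemLp H₂ 2 (volume.restrict (Ioc 0 π))) : MemLp (unfoldXi H₁ H₂) 2 volume :=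
  memLp_glueAt ((hH₁.add hH₂).const_mul _) ((hH₁.sub hH₂).const_mul _)

theorem setIntegral_unfoldXi_mul_conj_sin (hH₁ : MemLp H₁ 2 (volume.restrict (Ioc 0 π)))
    (hH₂ : MemLp H₂ 2 (volume.restrict (Ioc 0 π))) (ρ : ℂ) :
    ∫ u in Ioc 0 (2 * π), unfoldXi H₁ H₂ u * starRingEnd ℂ (Complex.sin (ρ * u)) =
      ∫ t in Ioc 0 π, (H₁ t * starRingEnd ℂ (xi1 ρ t) + H₂ t * starRingEnd ℂ (xi2 ρ t)) := by
  have hA : MemLp (fun t => (-1 / 2 : ℂ) * (H₁ t + H₂ t)) 2 (volume.restrict (Ioc 0 π)) :=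
    (hH₁.add hH₂).const_mul _
  have hB : MemLp (fun t => (1 / 2 : ℂ) * (H₁ t - H₂ t)) 2 (volume.restrict (Ioc 0 π)) :=
    (hH₁.sub hH₂).const_mul _
  rw [unfoldXi, setIntegral_glueAt_mul pi_pos.le hA hB (by fun_prop),
    ← integral_add (integrableOn_Ioc_mul_of_memLp hA (by fun_prop))
      (integrableOn_Ioc_mul_of_memLp hB (by fun_prop))]
  congr 1 with t
  simp only [xi1_eq, xi2_eq, map_div₀, map_sub, map_add, map_neg, map_ofNat]
  ring

theorem ae_eq_zero_of_unfoldXi (h : unfoldXi H₁ H₂ =ᵐ[volume.restrict (Ioc 0 (2 * π))] 0) :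
    H₁ =ᵐ[volume.restrict (Ioc 0 π)] 0 ∧ H₂ =ᵐ[volume.restrict (Ioc 0 π)] 0 := by
  obtain ⟨hA, hB⟩ := ae_eq_zero_of_glueAt h
  constructor <;> filter_upwards [hA, hB] with t hAt hBt <;>
    simp only [Pi.zero_apply] at hAt hBt ⊢
  · linear_combination hBt - hAt
  · linear_combination -hAt - hBt

end Completeness

/-- If `{sin(ρₙ t)}_{n>p}` is a Riesz basis (complete plus two-sided ℓ² inequality)
in `L₂(0,2π)`, then `{ξₙ}_{n>p}`, `ξₙ = (cos(ρₙπ)sin(ρₙt), −sin(ρₙπ)cos(ρₙt))`,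
is a Riesz basis in `𝒳 = L₂(0,π) ⊕ L₂(0,π)`. -/
theorem xi_riesz_basis (p : ℕ) (ρ : ℕ → ℂ)
    -- completeness of {sin(ρₙ t)}_{n>p} in L₂(0,2π)
    (hcomp : ∀ h : ℝ → ℂ, MemLp h 2 (volume.restrict (Ioc (0:ℝ) (2 * Real.pi))) →
      (∀ n, p < n →
        ∫ t in Ioc (0:ℝ) (2 * Real.pi),
          h t * (starRingEnd ℂ) (Complex.sin (ρ n * (t : ℂ))) = 0) →
      h =ᵐ[volume.restrict (Ioc (0:ℝ) (2 * Real.pi))] 0)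
    -- two-sided Riesz inequality for {sin(ρₙ t)}_{n>p} in L₂(0,2π)
    (hineq : ∃ M₁ M₂ : ℝ, 0 < M₁ ∧ 0 < M₂ ∧
      ∀ s : Finset ℕ, (∀ n ∈ s, p < n) → ∀ b : ℕ → ℂ,
        M₁ * ∑ n ∈ s, ‖b n‖ ^ 2 ≤
          (∫ t in Ioc (0:ℝ) (2 * Real.pi),
            ‖∑ n ∈ s, b n * Complex.sin (ρ n * (t : ℂ))‖ ^ 2) ∧
        (∫ t in Ioc (0:ℝ) (2 * Real.pi),
            ‖∑ n ∈ s, b n * Complex.sin (ρ n * (t : ℂ))‖ ^ 2) ≤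
          M₂ * ∑ n ∈ s, ‖b n‖ ^ 2) :
    -- conclusion: {ξₙ}_{n>p} is a Riesz basis in 𝒳 = L₂(0,π) ⊕ L₂(0,π):
    -- (completeness)
    (∀ H₁ H₂ : ℝ → ℂ, MemLp H₁ 2 (volume.restrict (Ioc (0:ℝ) Real.pi)) →
      MemLp H₂ 2 (volume.restrict (Ioc (0:ℝ) Real.pi)) →
      (∀ n, p < n →
        ∫ t in Ioc (0:ℝ) Real.pi,
          (H₁ t * (starRingEnd ℂ) (xi1 (ρ n) t) +
            H₂ t * (starRingEnd ℂ) (xi2 (ρ n) t)) = 0) →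
      (H₁ =ᵐ[volume.restrict (Ioc (0:ℝ) Real.pi)] 0 ∧
        H₂ =ᵐ[volume.restrict (Ioc (0:ℝ) Real.pi)] 0))
    -- (two-sided ℓ² inequality)
    ∧ (∃ M₁ M₂ : ℝ, 0 < M₁ ∧ 0 < M₂ ∧
      ∀ s : Finset ℕ, (∀ n ∈ s, p < n) → ∀ b : ℕ → ℂ,
        M₁ * ∑ n ∈ s, ‖b n‖ ^ 2 ≤
          ((∫ t in Ioc (0:ℝ) Real.pi, ‖∑ n ∈ s, b n * xi1 (ρ n) t‖ ^ 2) +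
            ∫ t in Ioc (0:ℝ) Real.pi, ‖∑ n ∈ s, b n * xi2 (ρ n) t‖ ^ 2) ∧
        ((∫ t in Ioc (0:ℝ) Real.pi, ‖∑ n ∈ s, b n * xi1 (ρ n) t‖ ^ 2) +
            ∫ t in Ioc (0:ℝ) Real.pi, ‖∑ n ∈ s, b n * xi2 (ρ n) t‖ ^ 2) ≤
          M₂ * ∑ n ∈ s, ‖b n‖ ^ 2) := by
  refine ⟨fun H₁ H₂ hH₁ hH₂ hξ => ?_, ?_⟩
  · exact ae_eq_zero_of_unfoldXi <| hcomp _ ((memLp_unfoldXi hH₁ hH₂).restrict _)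
      fun n hn => (setIntegral_unfoldXi_mul_conj_sin hH₁ hH₂ (ρ n)).trans (hξ n hn)
  · obtain ⟨M₁, M₂, hM₁, hM₂, hb⟩ := hineq
    refine ⟨M₁ / 2, M₂ / 2, by positivity, by positivity, fun s hs b => ?_⟩
    obtain ⟨hlow, hup⟩ := hb s hs b
    rw [setIntegral_norm_sq_sum_xi]
    constructor <;> linarith
end

section
/- Let H be a Hilbert space, {ṽₙ} with {ṽₙ/‖ṽₙ‖} a Riesz basis of H, ũ ∈ H with (ũ, ṽₙ) = w̃ₙ, and let {vₙ}, {wₙ} satisfy Z = (Σ ‖ṽₙ/‖ṽₙ‖ − vₙ/‖vₙ‖‖²)^{1/2} and T = (Σ |w̃ₙ/‖ṽₙ‖ − wₙ/‖vₙ‖|²)^{1/2}, with Z sufficiently small. Then there exists a unique u ∈ H with (u, vₙ) = wₙ for all n, and ‖u − ũ‖ ≤ C(Z + T) where C depends only on {ṽₙ} and ũ. -/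
/-! The synthesis operator `c ↦ ∑ cₙ gₙ` of a complete family with two-sided finite-sum bounds
`m₁ ‖c‖ ≤ ‖∑ cₙ gₙ‖ ≤ m₂ ‖c‖` is an isomorphism `ℓ² ≃ H` (bounded below with closed range, and
its range has trivial orthogonal complement by completeness). Hence so is its adjoint
`x ↦ (⟪gₙ, x⟫)ₙ`: every moment problem with `ℓ²` data has exactly one solution, and
`m₁ ‖x‖ ≤ ‖(⟪x, gₙ⟫)ₙ‖_{ℓ²}`. By Cauchy–Schwarz, an `ℓ²`-perturbation `hₙ` of `gₙ` of size `Z < m₁`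
keeps the bounds with constants `m₁ - Z`, `m₂ + Z`, and keeps completeness. For `gₙ = ṽₙ/‖ṽₙ‖`,
`hₙ = vₙ/‖vₙ‖` the moments of `ũ - u` against `hₙ` are `(w̃ₙ/‖ṽₙ‖ - wₙ/‖vₙ‖) - ⟪ũ, gₙ - hₙ⟫`, of
`ℓ²` norm at most `T + ‖ũ‖ Z`; with `Z ≤ m₁/2` this gives `‖u - ũ‖ ≤ 2/m₁ (1 + ‖ũ‖) (Z + T)`. -/

open Finset

variable {H : Type*} [NormedAddCommGroup H] [InnerProductSpace ℂ H] [CompleteSpace H]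

/-- A Riesz basis: a complete family satisfying the two-sided ℓ² inequality
for all finite linear combinations. -/
def IsRieszBasis (f : ℕ → H) : Prop :=
  (∀ x : H, (∀ n, (inner ℂ x (f n) : ℂ) = 0) → x = 0) ∧
  ∃ M₁ M₂ : ℝ, 0 < M₁ ∧ 0 < M₂ ∧ ∀ (s : Finset ℕ) (b : ℕ → ℂ),
    M₁ * ∑ n ∈ s, ‖b n‖ ^ 2 ≤ ‖∑ n ∈ s, b n • f n‖ ^ 2 ∧
    ‖∑ n ∈ s, b n • f n‖ ^ 2 ≤ M₂ * ∑ n ∈ s, ‖b n‖ ^ 2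

/-- The normalization `x/‖x‖` of a vector. -/
noncomputable def nrml (x : H) : H := ((‖x‖⁻¹ : ℝ) : ℂ) • x

open Filter Topology
open scoped InnerProductSpace

local notation "ℓ²(" 𝕜 ")" => lp (fun _ : ℕ => 𝕜) 2

section L2
variable {α : Type*} {E : α → Type*} [∀ i, NormedAddCommGroup (E i)]

theorem memℓp_two_iff {f : ∀ i, E i} : Memℓp f 2 ↔ Summable fun i => ‖f i‖ ^ 2 := by
  rw [memℓp_gen_iff (by norm_num)]
  norm_num

theorem lp.norm_two_eq_sqrt_tsum (f : lp E 2) : ‖f‖ = √(∑' i, ‖f i‖ ^ 2) := by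
  rw [lp.norm_eq_tsum_rpow (by norm_num), Real.sqrt_eq_rpow]
  norm_num

theorem lp.tendsto_sqrt_sum_norm_sq (f : lp E 2) :
    Tendsto (fun s : Finset α => √(∑ i ∈ s, ‖f i‖ ^ 2)) atTop (𝓝 ‖f‖) := by
  rw [lp.norm_two_eq_sqrt_tsum]
  exact (Real.continuous_sqrt.tendsto _).comp (memℓp_two_iff.1 f.2).hasSum

variable {f g : ∀ i, E i} (hf : Summable fun i => ‖f i‖ ^ 2) (hg : Summable fun i => ‖g i‖ ^ 2)
include hf hg

theorem Summable.norm_sub_sq : Summable fun i => ‖f i - g i‖ ^ 2 :=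
  memℓp_two_iff.1 ((memℓp_two_iff.2 hf).sub (memℓp_two_iff.2 hg))

theorem sqrt_tsum_norm_sub_sq_le :
    √(∑' i, ‖f i - g i‖ ^ 2) ≤ √(∑' i, ‖f i‖ ^ 2) + √(∑' i, ‖g i‖ ^ 2) := by
  let F : lp E 2 := ⟨f, memℓp_two_iff.2 hf⟩
  let G : lp E 2 := ⟨g, memℓp_two_iff.2 hg⟩
  simpa only [lp.norm_two_eq_sqrt_tsum, lp.coeFn_sub, Pi.sub_apply] using norm_sub_le F G

end L2

namespace ContinuousLinearMap
variable {𝕜 E F : Type*} [RCLike 𝕜] [NormedAddCommGroup E] [InnerProductSpace 𝕜 E]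
  [CompleteSpace E] [NormedAddCommGroup F] [InnerProductSpace 𝕜 F] [CompleteSpace F]

theorem surjective_of_bound_of_injective_adjoint (A : E →L[𝕜] F) {m : ℝ} (hm : 0 < m)
    (hA : ∀ x, m * ‖x‖ ≤ ‖A x‖) (hA' : Function.Injective (adjoint A)) :
    Function.Surjective A := by
  have hanti : AntilipschitzWith (m⁻¹).toNNReal A :=
    A.antilipschitz_of_bound fun x => by
      rw [Real.coe_toNNReal _ (by positivity), inv_mul_eq_div, le_div_iff₀ hm, mul_comm]
      exact hA x
  have : CompleteSpace A.range := (hanti.isClosed_range A.uniformContinuous).completeSpace_coe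
  refine LinearMap.range_eq_top.1 (Submodule.orthogonal_eq_bot_iff.1 ?_)
  rw [orthogonal_range, LinearMap.ker_eq_bot]
  exact hA'

theorem mul_norm_le_norm_adjoint_apply (A : E →L[𝕜] F) {m : ℝ} (hm : 0 ≤ m)
    (hA : ∀ x, m * ‖x‖ ≤ ‖A x‖) (hsurj : Function.Surjective A) (y : F) :
    m * ‖y‖ ≤ ‖adjoint A y‖ := by
  obtain ⟨x, rfl⟩ := hsurj y
  have hsq : ‖A x‖ ^ 2 ≤ ‖adjoint A (A x)‖ * ‖x‖ := by
    rw [@norm_sq_eq_re_inner 𝕜, ← adjoint_inner_left]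
    exact (RCLike.re_le_norm _).trans (norm_inner_le_norm _ _)
  rcases (norm_nonneg (A x)).eq_or_lt with h0 | hpos
  · rw [← h0, mul_zero]
    exact norm_nonneg _
  · refine le_of_mul_le_mul_right ?_ hpos
    nlinarith [mul_le_mul_of_nonneg_left (hA x) (norm_nonneg (adjoint A (A x)))]

end ContinuousLinearMap

section RieszBounds
variable (𝕜 : Type*) {E : Type*} [RCLike 𝕜] [NormedAddCommGroup E] [NormedSpace 𝕜 E]

def RieszUpperBound (g : ℕ → E) (m : ℝ) : Prop :=
  ∀ (s : Finset ℕ) (b : ℕ → 𝕜), ‖∑ n ∈ s, b n • g n‖ ≤ m * √(∑ n ∈ s, ‖b n‖ ^ 2)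

def RieszLowerBound (g : ℕ → E) (m : ℝ) : Prop :=
  ∀ (s : Finset ℕ) (b : ℕ → 𝕜), m * √(∑ n ∈ s, ‖b n‖ ^ 2) ≤ ‖∑ n ∈ s, b n • g n‖

variable {𝕜} {g e : ℕ → E} {a b : ℝ}

theorem RieszUpperBound.nonneg (hg : RieszUpperBound 𝕜 g a) : 0 ≤ a := by
  simpa using (norm_nonneg _).trans (hg {0} 1)

theorem rieszUpperBound_of_summable_sq (he : Summable fun n => ‖e n‖ ^ 2) :
    RieszUpperBound 𝕜 e √(∑' n, ‖e n‖ ^ 2) := fun s b =>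
  calc ‖∑ n ∈ s, b n • e n‖ ≤ ∑ n ∈ s, ‖b n‖ * ‖e n‖ :=
        norm_sum_le_of_le s fun n _ => norm_smul_le _ _
    _ ≤ √(∑ n ∈ s, ‖b n‖ ^ 2) * √(∑ n ∈ s, ‖e n‖ ^ 2) := Real.sum_mul_le_sqrt_mul_sqrt s _ _
    _ ≤ √(∑ n ∈ s, ‖b n‖ ^ 2) * √(∑' n, ‖e n‖ ^ 2) := by
      gcongr
      exact he.sum_le_tsum s fun n _ => by positivity
    _ = _ := mul_comm _ _

theorem RieszUpperBound.sub (hg : RieszUpperBound 𝕜 g a) (he : RieszUpperBound 𝕜 e b) :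
    RieszUpperBound 𝕜 (fun n => g n - e n) (a + b) := fun s c => by
  simp only [smul_sub, Finset.sum_sub_distrib]
  linarith [norm_sub_le (∑ n ∈ s, c n • g n) (∑ n ∈ s, c n • e n), hg s c, he s c]

theorem RieszLowerBound.sub (hg : RieszLowerBound 𝕜 g a) (he : RieszUpperBound 𝕜 e b) :
    RieszLowerBound 𝕜 (fun n => g n - e n) (a - b) := fun s c => by
  simp only [smul_sub, Finset.sum_sub_distrib]
  linarith [norm_sub_norm_le (∑ n ∈ s, c n • g n) (∑ n ∈ s, c n • e n), hg s c, he s c]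

variable [CompleteSpace E]

theorem RieszUpperBound.summable_smul (hg : RieszUpperBound 𝕜 g a) (c : ℓ²(𝕜)) :
    Summable fun n => c n • g n := by
  have ha := hg.nonneg
  refine summable_iff_vanishing_norm.2 fun ε hε => ?_
  obtain ⟨s, hs⟩ := summable_iff_vanishing_norm.1 (memℓp_two_iff.1 c.2) ((ε / (a + 1)) ^ 2)
    (by positivity)
  refine ⟨s, fun t ht => ?_⟩
  have hsmall : √(∑ n ∈ t, ‖c n‖ ^ 2) < ε / (a + 1) :=
    (Real.sqrt_lt' (by positivity)).2 ((le_abs_self _).trans_lt (hs t ht))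
  calc ‖∑ n ∈ t, c n • g n‖ ≤ a * √(∑ n ∈ t, ‖c n‖ ^ 2) := hg t c
    _ ≤ a * (ε / (a + 1)) := by gcongr
    _ < ε := by
      rw [mul_div_assoc', div_lt_iff₀ (by positivity)]
      linarith

theorem RieszUpperBound.tendsto_norm_sum_smul (hg : RieszUpperBound 𝕜 g a) (c : ℓ²(𝕜)) :
    Tendsto (fun s : Finset ℕ => ‖∑ n ∈ s, c n • g n‖) atTop (𝓝 ‖∑' n, c n • g n‖) :=
  (continuous_norm.tendsto _).comp (hg.summable_smul c).hasSum

noncomputable def RieszUpperBound.synthesis (hg : RieszUpperBound 𝕜 g a) : ℓ²(𝕜) →L[𝕜] E :=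
  LinearMap.mkContinuous
    { toFun := fun c => ∑' n, c n • g n
      map_add' := fun c d => by
        simp only [lp.coeFn_add, Pi.add_apply, add_smul]
        exact (hg.summable_smul c).tsum_add (hg.summable_smul d)
      map_smul' := fun r c => by
        simp only [lp.coeFn_smul, Pi.smul_apply, smul_eq_mul, mul_smul, RingHom.id_apply]
        exact (hg.summable_smul c).tsum_const_smul r }
    a fun c => le_of_tendsto_of_tendsto' (hg.tendsto_norm_sum_smul c)
      ((lp.tendsto_sqrt_sum_norm_sq c).const_mul a) fun s => hg s c

theorem RieszUpperBound.synthesis_apply (hg : RieszUpperBound 𝕜 g a) (c : ℓ²(𝕜)) :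
    hg.synthesis c = ∑' n, c n • g n := rfl

theorem RieszUpperBound.synthesis_single (hg : RieszUpperBound 𝕜 g a) (n : ℕ) :
    hg.synthesis (lp.single 2 n 1) = g n := by
  rw [hg.synthesis_apply,
    tsum_eq_single n fun m hm => by rw [lp.single_apply_ne 2 n _ hm, zero_smul],
    lp.single_apply_self, one_smul]

theorem RieszLowerBound.mul_norm_le_norm_synthesis (hl : RieszLowerBound 𝕜 g b)
    (hu : RieszUpperBound 𝕜 g a) (c : ℓ²(𝕜)) : b * ‖c‖ ≤ ‖hu.synthesis c‖ :=
  le_of_tendsto_of_tendsto' ((lp.tendsto_sqrt_sum_norm_sq c).const_mul b)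
    (hu.tendsto_norm_sum_smul c) fun s => hl s c

end RieszBounds

section RieszBasis
variable {𝕜 E : Type*} [RCLike 𝕜] [NormedAddCommGroup E] [InnerProductSpace 𝕜 E]

theorem Summable.norm_inner_sq {e : ℕ → E} (he : Summable fun n => ‖e n‖ ^ 2) (x : E) :
    Summable fun n => ‖⟪x, e n⟫_𝕜‖ ^ 2 :=
  (he.mul_left (‖x‖ ^ 2)).of_nonneg_of_le (fun n => by positivity) fun n => by
    rw [← mul_pow]; gcongr; exact norm_inner_le_norm x (e n)

theorem sqrt_tsum_norm_inner_sq_le {e : ℕ → E} (he : Summable fun n => ‖e n‖ ^ 2) (x : E) :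
    √(∑' n, ‖⟪x, e n⟫_𝕜‖ ^ 2) ≤ ‖x‖ * √(∑' n, ‖e n‖ ^ 2) := by
  rw [← Real.sqrt_sq (norm_nonneg x), ← Real.sqrt_mul (by positivity), ← tsum_mul_left]
  refine Real.sqrt_le_sqrt (Summable.tsum_le_tsum (fun n => ?_) (he.norm_inner_sq x)
    (he.mul_left _))
  rw [← mul_pow]; gcongr; exact norm_inner_le_norm x (e n)

theorem norm_sub_le_of_inner_eq {g h : ℕ → E} {a b : ℕ → 𝕜} {m : ℝ} {x y : E}
    (hh : ∀ z, m * ‖z‖ ≤ √(∑' n, ‖⟪z, h n⟫_𝕜‖ ^ 2))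
    (he : Summable fun n => ‖g n - h n‖ ^ 2) (hab : Summable fun n => ‖a n - b n‖ ^ 2)
    (hx : ∀ n, ⟪x, g n⟫_𝕜 = a n) (hy : ∀ n, ⟪y, h n⟫_𝕜 = b n) :
    m * ‖y - x‖ ≤ √(∑' n, ‖a n - b n‖ ^ 2) + ‖x‖ * √(∑' n, ‖g n - h n‖ ^ 2) := by
  have hxy (n : ℕ) : ⟪x - y, h n⟫_𝕜 = (a n - b n) - ⟪x, g n - h n⟫_𝕜 := by
    rw [inner_sub_left, inner_sub_right, hx, hy]; ring
  calc m * ‖y - x‖ = m * ‖x - y‖ := by rw [norm_sub_rev]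
    _ ≤ √(∑' n, ‖⟪x - y, h n⟫_𝕜‖ ^ 2) := hh _
    _ = √(∑' n, ‖(a n - b n) - ⟪x, g n - h n⟫_𝕜‖ ^ 2) := by simp only [hxy]
    _ ≤ √(∑' n, ‖a n - b n‖ ^ 2) + √(∑' n, ‖⟪x, g n - h n⟫_𝕜‖ ^ 2) :=
      sqrt_tsum_norm_sub_sq_le hab (he.norm_inner_sq x)
    _ ≤ _ := by gcongr; exact sqrt_tsum_norm_inner_sq_le he x

variable {g : ℕ → E} {m₁ m₂ : ℝ}

variable (𝕜) in
structure IsRieszBasisWith (g : ℕ → E) (m₁ m₂ : ℝ) : Prop where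
  complete : ∀ x, (∀ n, ⟪x, g n⟫_𝕜 = 0) → x = 0
  lower : RieszLowerBound 𝕜 g m₁
  upper : RieszUpperBound 𝕜 g m₂

theorem IsRieszBasisWith.eq_of_inner_eq (hg : IsRieszBasisWith 𝕜 g m₁ m₂) {d : ℕ → 𝕜}
    {x y : E} (hx : ∀ n, ⟪x, g n⟫_𝕜 = d n) (hy : ∀ n, ⟪y, g n⟫_𝕜 = d n) : x = y :=
  sub_eq_zero.1 (hg.complete _ fun n => by rw [inner_sub_left, hx, hy, sub_self])

variable [CompleteSpace E]

theorem RieszUpperBound.adjoint_synthesis_apply (hg : RieszUpperBound 𝕜 g m₂) (x : E) (n : ℕ) :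
    ContinuousLinearMap.adjoint hg.synthesis x n = ⟪g n, x⟫_𝕜 := by
  classical
  rw [← hg.synthesis_single, ← ContinuousLinearMap.adjoint_inner_right, lp.inner_single_left,
    RCLike.inner_apply, map_one, mul_one]

theorem RieszUpperBound.summable_norm_inner_sq (hg : RieszUpperBound 𝕜 g m₂) (x : E) :
    Summable fun n => ‖⟪x, g n⟫_𝕜‖ ^ 2 := by
  simpa only [hg.adjoint_synthesis_apply, norm_inner_symm] using
    memℓp_two_iff.1 (ContinuousLinearMap.adjoint hg.synthesis x).2

theorem RieszUpperBound.norm_adjoint_synthesis (hg : RieszUpperBound 𝕜 g m₂) (x : E) :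
    ‖ContinuousLinearMap.adjoint hg.synthesis x‖ = √(∑' n, ‖⟪x, g n⟫_𝕜‖ ^ 2) := by
  simp only [lp.norm_two_eq_sqrt_tsum, hg.adjoint_synthesis_apply, norm_inner_symm]

namespace IsRieszBasisWith
variable (hg : IsRieszBasisWith 𝕜 g m₁ m₂) (hm : 0 < m₁)
include hg hm

theorem synthesis_surjective : Function.Surjective hg.upper.synthesis :=
  hg.upper.synthesis.surjective_of_bound_of_injective_adjoint hm
    (hg.lower.mul_norm_le_norm_synthesis hg.upper) fun x y hxy => by
      refine sub_eq_zero.1 (hg.complete _ fun n => ?_)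
      rw [inner_sub_left, ← inner_conj_symm, ← inner_conj_symm y,
        ← hg.upper.adjoint_synthesis_apply, ← hg.upper.adjoint_synthesis_apply, hxy, sub_self]

theorem mul_norm_le_sqrt_tsum (x : E) : m₁ * ‖x‖ ≤ √(∑' n, ‖⟪x, g n⟫_𝕜‖ ^ 2) := by
  rw [← hg.upper.norm_adjoint_synthesis]
  exact hg.upper.synthesis.mul_norm_le_norm_adjoint_apply hm.le
    (hg.lower.mul_norm_le_norm_synthesis hg.upper) (hg.synthesis_surjective hm) x

theorem synthesis_injective : Function.Injective hg.upper.synthesis := fun c c' h => by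
  have hle := hg.lower.mul_norm_le_norm_synthesis hg.upper (c - c')
  rw [map_sub, h, sub_self, norm_zero, ← mul_zero m₁] at hle
  exact sub_eq_zero.1 (norm_le_zero_iff.1 (le_of_mul_le_mul_left hle hm))

theorem exists_inner_eq {d : ℕ → 𝕜} (hd : Summable fun n => ‖d n‖ ^ 2) :
    ∃ u : E, ∀ n, ⟪u, g n⟫_𝕜 = d n := by
  have hsurj : Function.Surjective (ContinuousLinearMap.adjoint hg.upper.synthesis) :=
    (ContinuousLinearMap.adjoint hg.upper.synthesis).surjective_of_bound_of_injective_adjoint hm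
      (fun x => (hg.mul_norm_le_sqrt_tsum hm x).trans_eq (hg.upper.norm_adjoint_synthesis x).symm)
      (by simpa only [ContinuousLinearMap.adjoint_adjoint] using hg.synthesis_injective hm)
  obtain ⟨u, hu⟩ := hsurj (star ⟨d, memℓp_two_iff.2 hd⟩)
  refine ⟨u, fun n => ?_⟩
  rw [← inner_conj_symm, ← hg.upper.adjoint_synthesis_apply, hu, lp.star_apply]
  exact star_star _

theorem perturb {h : ℕ → E} (he : Summable fun n => ‖g n - h n‖ ^ 2)
    (hZ : √(∑' n, ‖g n - h n‖ ^ 2) < m₁) :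
    IsRieszBasisWith 𝕜 h (m₁ - √(∑' n, ‖g n - h n‖ ^ 2)) (m₂ + √(∑' n, ‖g n - h n‖ ^ 2)) := by
  have he' := rieszUpperBound_of_summable_sq (𝕜 := 𝕜) he
  refine ⟨fun x hx => ?_, by simpa only [sub_sub_cancel] using hg.lower.sub he',
    by simpa only [sub_sub_cancel] using hg.upper.sub he'⟩
  have hxg (n : ℕ) : ⟪x, g n⟫_𝕜 = ⟪x, g n - h n⟫_𝕜 := by rw [inner_sub_right, hx, sub_zero]
  have hle : m₁ * ‖x‖ ≤ ‖x‖ * √(∑' n, ‖g n - h n‖ ^ 2) :=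
    calc m₁ * ‖x‖ ≤ √(∑' n, ‖⟪x, g n⟫_𝕜‖ ^ 2) := hg.mul_norm_le_sqrt_tsum hm x
      _ = √(∑' n, ‖⟪x, g n - h n⟫_𝕜‖ ^ 2) := by simp only [hxg]
      _ ≤ _ := sqrt_tsum_norm_inner_sq_le he x
  exact norm_eq_zero.1 (by nlinarith [norm_nonneg x])

end IsRieszBasisWith
end RieszBasis

theorem inner_nrml_right {F : Type*} [NormedAddCommGroup F] [InnerProductSpace ℂ F] (u x : F) :
    ⟪u, nrml x⟫_ℂ = ⟪u, x⟫_ℂ / ‖x‖ := by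
  rw [nrml, inner_smul_right, div_eq_inv_mul, Complex.ofReal_inv]

theorem IsRieszBasis.exists_isRieszBasisWith {F : Type*} [NormedAddCommGroup F]
    [InnerProductSpace ℂ F] {f : ℕ → F} (hf : IsRieszBasis f) :
    ∃ m₁ m₂ : ℝ, 0 < m₁ ∧ IsRieszBasisWith ℂ f m₁ m₂ := by
  obtain ⟨hcomplete, M₁, M₂, hM₁, -, hM⟩ := hf
  refine ⟨√M₁, √M₂, Real.sqrt_pos.2 hM₁, hcomplete, fun s b => ?_, fun s b => ?_⟩
  · simpa only [Real.sqrt_mul' _ (by positivity : 0 ≤ ∑ n ∈ s, ‖b n‖ ^ 2),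
      Real.sqrt_sq (norm_nonneg _)] using Real.sqrt_le_sqrt (hM s b).1
  · simpa only [Real.sqrt_mul' _ (by positivity : 0 ≤ ∑ n ∈ s, ‖b n‖ ^ 2),
      Real.sqrt_sq (norm_nonneg _)] using Real.sqrt_le_sqrt (hM s b).2

theorem moment_problem_stability_general (vt : ℕ → H) (wt : ℕ → ℂ) (ut : H)
    (hbasis : IsRieszBasis fun n => nrml (vt n))
    (hut : ∀ n, (inner ℂ ut (vt n) : ℂ) = wt n) :
    ∃ δ C : ℝ, 0 < δ ∧ 0 < C ∧
      ∀ (v : ℕ → H) (w : ℕ → ℂ), (∀ n, v n ≠ 0) →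
        Summable (fun n => ‖nrml (vt n) - nrml (v n)‖ ^ 2) →
        Summable (fun n => ‖wt n / (‖vt n‖ : ℂ) - w n / (‖v n‖ : ℂ)‖ ^ 2) →
        Real.sqrt (∑' n, ‖nrml (vt n) - nrml (v n)‖ ^ 2) ≤ δ →
        (∃! u : H, ∀ n, (inner ℂ u (v n) : ℂ) = w n) ∧
        ∀ u : H, (∀ n, (inner ℂ u (v n) : ℂ) = w n) →
          ‖u - ut‖ ≤ C * (Real.sqrt (∑' n, ‖nrml (vt n) - nrml (v n)‖ ^ 2) +
            Real.sqrt (∑' n, ‖wt n / (‖vt n‖ : ℂ) - w n / (‖v n‖ : ℂ)‖ ^ 2)) := by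
  obtain ⟨m₁, m₂, hm₁, hg⟩ := hbasis.exists_isRieszBasisWith
  refine ⟨m₁ / 2, 2 / m₁ * (1 + ‖ut‖), by positivity, by positivity,
    fun v w hv hZ hT hZδ => ?_⟩
  have hh := hg.perturb hm₁ hZ (by linarith)
  have hmoment (u : H) :
      (∀ n, ⟪u, v n⟫_ℂ = w n) ↔ ∀ n, ⟪u, nrml (v n)⟫_ℂ = w n / ‖v n‖ :=
    forall_congr' fun n => by rw [inner_nrml_right, div_left_inj' (by simpa using hv n)]
  have hut' (n : ℕ) : ⟪ut, nrml (vt n)⟫_ℂ = wt n / ‖vt n‖ := by rw [inner_nrml_right, hut]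
  have hd : Summable fun n => ‖w n / (‖v n‖ : ℂ)‖ ^ 2 := by
    have hc := hg.upper.summable_norm_inner_sq ut
    simp only [hut'] at hc
    simpa only [sub_sub_cancel] using hc.norm_sub_sq hT
  obtain ⟨u, hu⟩ := hh.exists_inner_eq (by linarith) hd
  refine ⟨⟨u, (hmoment u).2 hu, fun u' hu' => hh.eq_of_inner_eq ((hmoment u').1 hu') hu⟩,
    fun u' hu' => ?_⟩
  have hest := norm_sub_le_of_inner_eq (hh.mul_norm_le_sqrt_tsum (by linarith)) hZ hT hut'
    ((hmoment u').1 hu')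
  have hZ0 := Real.sqrt_nonneg (∑' n, ‖nrml (vt n) - nrml (v n)‖ ^ 2)
  have hT0 := Real.sqrt_nonneg (∑' n, ‖wt n / (‖vt n‖ : ℂ) - w n / (‖v n‖ : ℂ)‖ ^ 2)
  rw [mul_assoc, div_mul_eq_mul_div, le_div_iff₀ hm₁]
  nlinarith [norm_nonneg ut, norm_nonneg (u' - ut)]

/-- Stability of the moment problem `(u, vₙ) = wₙ` (Lemma 5 of Bondarenko 2018):
if `{ṽₙ/‖ṽₙ‖}` is a Riesz basis, `(ũ, ṽₙ) = w̃ₙ`, and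
`Z = (Σ ‖ṽₙ/‖ṽₙ‖ − vₙ/‖vₙ‖‖²)^{1/2}`, `T = (Σ |w̃ₙ/‖ṽₙ‖ − wₙ/‖vₙ‖|²)^{1/2}`
with `Z` sufficiently small, then the moment problem `(u, vₙ) = wₙ` has a unique
solution `u ∈ H` with `‖u − ũ‖ ≤ C(Z + T)`, `C` depending only on `{ṽₙ}`, `ũ`. -/
theorem moment_problem_stability (vt : ℕ → H) (wt : ℕ → ℂ) (ut : H)
    (hvt : ∀ n, vt n ≠ 0)
    (hbasis : IsRieszBasis fun n => nrml (vt n))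
    (hut : ∀ n, (inner ℂ ut (vt n) : ℂ) = wt n) :
    ∃ δ C : ℝ, 0 < δ ∧ 0 < C ∧
      ∀ (v : ℕ → H) (w : ℕ → ℂ), (∀ n, v n ≠ 0) →
        Summable (fun n => ‖nrml (vt n) - nrml (v n)‖ ^ 2) →
        Summable (fun n => ‖wt n / (‖vt n‖ : ℂ) - w n / (‖v n‖ : ℂ)‖ ^ 2) →
        Real.sqrt (∑' n, ‖nrml (vt n) - nrml (v n)‖ ^ 2) ≤ δ →
        (∃! u : H, ∀ n, (inner ℂ u (v n) : ℂ) = w n) ∧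
        ∀ u : H, (∀ n, (inner ℂ u (v n) : ℂ) = w n) →
          ‖u - ut‖ ≤ C * (Real.sqrt (∑' n, ‖nrml (vt n) - nrml (v n)‖ ^ 2) +
            Real.sqrt (∑' n, ‖wt n / (‖vt n‖ : ℂ) - w n / (‖v n‖ : ℂ)‖ ^ 2)) :=
  moment_problem_stability_general vt wt ut hbasis hut
end
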